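/- Let G be an r-regular connected non-bipartite simple graph with r > 2, let a and b be two distinct vertices of G, and let c and d be two distinct elements of V(G) ∪ E(G). If the pair states e_a − e_b and e_c − e_d of the total graph T(G) are Laplacian strongly cospectral, then c and d are both vertices of G. -/

import Mathlib

open Matrix Complex

/-- The total graph of a simple graph `G`: vertices are the vertices and edges of `G`,
with adjacency given by adjacency/incidence in `G`. -/
def SimpleGraph.totalGraph {V : Type*} (G : SimpleGraph V) : SimpleGraph (V ⊕ G.edgeSet) where
  Adj x y :=
    match x, y with
    | Sum.inl u, Sum.inl v => G.Adj u v
    | Sum.inl u, Sum.inr e => u ∈ (e : Sym2 V)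
    | Sum.inr e, Sum.inl v => v ∈ (e : Sym2 V)
    | Sum.inr e, Sum.inr f => e ≠ f ∧ ∃ v, v ∈ (e : Sym2 V) ∧ v ∈ (f : Sym2 V)
  symm := ⟨by
    rintro (u | e) (v | f) h
    · exact h.symm
    · exact h
    · exact h
    · exact ⟨h.1.symm, let ⟨v, hv1, hv2⟩ := h.2; ⟨v, hv2, hv1⟩⟩⟩
  loopless := ⟨by
    rintro (u | e) h
    · exact G.irrefl h
    · exact h.1 rfl⟩

noncomputable instance {V : Type*} (G : SimpleGraph V) : DecidableRel G.totalGraph.Adj :=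
  Classical.decRel _

/-- The Laplacian transition matrix `exp(-i t L)` of a graph. -/
noncomputable def SimpleGraph.transitionMatrix {V : Type*} (G : SimpleGraph V) [Fintype V]
    [DecidableEq V] [DecidableRel G.Adj] (t : ℝ) : Matrix V V ℂ :=
  NormedSpace.exp ((-(Complex.I * (t : ℂ))) • (G.lapMatrix ℝ).map Complex.ofReal)

/-- The (unnormalized) pair state `e_a - e_b`, as a complex vector. -/
def pairState {V : Type*} [DecidableEq V] (a b : V) : V → ℂ :=
  Pi.single a 1 - Pi.single b 1

/-- The quantity `(1/2) (e_a - e_b)ᵀ U_G(t) (e_c - e_d)`. -/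
noncomputable def pairTransfer {V : Type*} (G : SimpleGraph V) [Fintype V] [DecidableEq V]
    [DecidableRel G.Adj] (t : ℝ) (a b c d : V) : ℂ :=
  (1 / 2 : ℂ) * (pairState a b ⬝ᵥ (G.transitionMatrix t) *ᵥ pairState c d)

/-- Laplacian perfect pair state transfer between the (distinct) pair states
`e_a - e_b` and `e_c - e_d`. -/
def IsLPPST {V : Type*} (G : SimpleGraph V) [Fintype V] [DecidableEq V]
    [DecidableRel G.Adj] (a b c d : V) : Prop :=
  a ≠ b ∧ c ≠ d ∧ s(a, b) ≠ s(c, d) ∧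
    ∃ t : ℝ, t ≠ 0 ∧ ‖pairTransfer G t a b c d‖ = 1

/-- Laplacian pretty good pair state transfer between the (distinct) pair states
`e_a - e_b` and `e_c - e_d`. -/
def IsLPGPST {V : Type*} (G : SimpleGraph V) [Fintype V] [DecidableEq V]
    [DecidableRel G.Adj] (a b c d : V) : Prop :=
  a ≠ b ∧ c ≠ d ∧ s(a, b) ≠ s(c, d) ∧
    ∀ ε : ℝ, 0 < ε → ∃ t : ℝ, t ≠ 0 ∧ |‖pairTransfer G t a b c d‖ - 1| < ε

/-- The pair state `e_a - e_b` as a real vector in Euclidean space. -/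
noncomputable def pairStateR {V : Type*} [Fintype V] [DecidableEq V] (a b : V) :
    EuclideanSpace ℝ V :=
  EuclideanSpace.single a 1 - EuclideanSpace.single b 1

/-- The Laplacian eigenprojection `E_θ(G)`, i.e. the orthogonal projection onto the
`θ`-eigenspace of the Laplacian, applied to a vector. -/
noncomputable def lapProj {V : Type*} (G : SimpleGraph V) [Fintype V] [DecidableEq V]
    [DecidableRel G.Adj] (θ : ℝ) (x : EuclideanSpace ℝ V) : EuclideanSpace ℝ V :=
  (Submodule.orthogonalProjectionOnto
    (Module.End.eigenspace (Matrix.toEuclideanLin (G.lapMatrix ℝ)) θ) x : EuclideanSpace ℝ V)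

/-- `θ` is a Laplacian eigenvalue of `G`. -/
def IsLapEigenvalue {V : Type*} (G : SimpleGraph V) [Fintype V] [DecidableEq V]
    [DecidableRel G.Adj] (θ : ℝ) : Prop :=
  Module.End.HasEigenvalue (Matrix.toEuclideanLin (G.lapMatrix ℝ)) θ

/-- The pair states `e_a - e_b` and `e_c - e_d` are Laplacian strongly cospectral. -/
def StronglyCospectral {V : Type*} (G : SimpleGraph V) [Fintype V] [DecidableEq V]
    [DecidableRel G.Adj] (a b c d : V) : Prop :=
  ∀ θ : ℝ, lapProj G θ (pairStateR a b) = lapProj G θ (pairStateR c d) ∨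
    lapProj G θ (pairStateR a b) = -lapProj G θ (pairStateR c d)

/-- `θ ∈ Φ⁺_{ab,cd}`. -/
def InPhiPlus {V : Type*} (G : SimpleGraph V) [Fintype V] [DecidableEq V]
    [DecidableRel G.Adj] (θ : ℝ) (a b c d : V) : Prop :=
  lapProj G θ (pairStateR a b) = lapProj G θ (pairStateR c d) ∧
    lapProj G θ (pairStateR a b) ≠ 0

/-- `θ ∈ Φ⁻_{ab,cd}`. -/
def InPhiMinus {V : Type*} (G : SimpleGraph V) [Fintype V] [DecidableEq V]
    [DecidableRel G.Adj] (θ : ℝ) (a b c d : V) : Prop :=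
  lapProj G θ (pairStateR a b) = -lapProj G θ (pairStateR c d) ∧
    lapProj G θ (pairStateR a b) ≠ 0

/-- `θ⁺ = (r + 2 + 2θ + √((r+2)² - 4θ))/2`. -/
noncomputable def thetaP (r θ : ℝ) : ℝ :=
  (r + 2 + 2 * θ + Real.sqrt ((r + 2) ^ 2 - 4 * θ)) / 2

/-- `θ⁻ = (r + 2 + 2θ - √((r+2)² - 4θ))/2`. -/
noncomputable def thetaM (r θ : ℝ) : ℝ :=
  (r + 2 + 2 * θ - Real.sqrt ((r + 2) ^ 2 - 4 * θ)) / 2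

/-- `G` is bipartite with parts `X` and `Xᶜ`. -/
def IsBipartiteWith {V : Type*} (G : SimpleGraph V) (X : Set V) : Prop :=
  ∀ ⦃u v⦄, G.Adj u v → (u ∈ X ↔ v ∉ X)

/-- `G` is bipartite. -/
def IsBipartite {V : Type*} (G : SimpleGraph V) : Prop :=
  ∃ X : Set V, IsBipartiteWith G X

section AuxStmt19
open Sum Finset SimpleGraph
set_option linter.unusedSectionVars false
set_option linter.unusedVariables false
variable {V : Type*} {G : SimpleGraph V} [Fintype V] [DecidableEq V] [DecidableRel G.Adj]

@[simp] lemma totalGraph_adj_inl_inl {u v : V} :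
    G.totalGraph.Adj (inl u) (inl v) ↔ G.Adj u v := Iff.rfl
@[simp] lemma totalGraph_adj_inl_inr {u : V} {e : G.edgeSet} :
    G.totalGraph.Adj (inl u) (inr e) ↔ u ∈ (e : Sym2 V) := Iff.rfl
@[simp] lemma totalGraph_adj_inr_inl {u : V} {e : G.edgeSet} :
    G.totalGraph.Adj (inr e) (inl u) ↔ u ∈ (e : Sym2 V) := Iff.rfl
@[simp] lemma totalGraph_adj_inr_inr {e f : G.edgeSet} :
    G.totalGraph.Adj (inr e) (inr f) ↔
      e ≠ f ∧ ∃ v, v ∈ (e : Sym2 V) ∧ v ∈ (f : Sym2 V) := Iff.rfl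

noncomputable def eVal (φ : V → ℝ) : Sym2 V → ℝ :=
  Sym2.lift ⟨fun x y => φ x + φ y, fun x y => add_comm _ _⟩

@[simp] lemma eVal_mk (φ : V → ℝ) (x y : V) : eVal φ s(x, y) = φ x + φ y := rfl

lemma sum_inc (x : V) (F : Sym2 V → ℝ) :
    (∑ f : G.edgeSet, if x ∈ (f : Sym2 V) then F (f : Sym2 V) else 0)
      = ∑ y ∈ G.neighborFinset x, F s(x, y) := by
  classical
  rw [← Finset.sum_filter]
  refine Finset.sum_bij' (fun f hf => Sym2.Mem.other' (Finset.mem_filter.mp hf).2)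
    (fun y hy => ⟨s(x, y), G.mem_edgeSet.mpr ((G.mem_neighborFinset x y).mp hy)⟩)
    ?_ ?_ ?_ ?_ ?_
  · intro f hf
    rw [G.mem_neighborFinset]
    have h2 := f.2
    rw [← Sym2.other_spec' (Finset.mem_filter.mp hf).2] at h2
    exact G.mem_edgeSet.mp h2
  · intro y hy
    simp [Finset.mem_filter]
  · intro f hf
    exact Subtype.ext (Sym2.other_spec' (Finset.mem_filter.mp hf).2)
  · intro y hy
    exact Sym2.congr_right.mp (Sym2.other_spec' _)
  · intro f hf
    exact congrArg F (Sym2.other_spec' (Finset.mem_filter.mp hf).2).symm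

lemma lap_mulVec_row {W : Type*} [Fintype W] [DecidableEq W] (H : SimpleGraph W)
    [DecidableRel H.Adj] (v : W → ℝ) (z : W) :
    (H.lapMatrix ℝ *ᵥ v) z = ∑ w ∈ H.neighborFinset z, (v z - v w) := by
  rw [SimpleGraph.lapMatrix_mulVec_apply, Finset.sum_sub_distrib, Finset.sum_const,
    nsmul_eq_mul]
  rfl

lemma sum_pair_ite {s t : V} (hne : s ≠ t) (g : V → ℝ) :
    (∑ y : V, if y = s ∨ y = t then g y else 0) = g s + g t := by
  have : ∀ y : V, (if y = s ∨ y = t then g y else 0)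
      = (if y = s then g y else 0) + (if y = t then g y else 0) := by
    intro y
    by_cases h1 : y = s <;> by_cases h2 : y = t <;>
      simp [h1, h2, hne, hne.symm]
  rw [Finset.sum_congr rfl fun y _ => this y, Finset.sum_add_distrib]
  simp

lemma nbr_sum_ite {W : Type*} [Fintype W] [DecidableEq W] (H : SimpleGraph W)
    [DecidableRel H.Adj] (z : W) (g : W → ℝ) :
    (∑ w ∈ H.neighborFinset z, g w) = ∑ w : W, if H.Adj z w then g w else 0 := by
  rw [SimpleGraph.neighborFinset_eq_filter, Finset.sum_filter]

lemma total_eigen {r : ℕ} (hreg : G.IsRegularOfDegree r) (θ α : ℝ)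
    (hα : α ^ 2 + ((r : ℝ) - 2) * α - (2 * r - θ) = 0)
    (φ : V → ℝ) (hφ : G.lapMatrix ℝ *ᵥ φ = θ • φ) :
    G.totalGraph.lapMatrix ℝ *ᵥ (Sum.elim (fun x => α * φ x) (fun f : G.edgeSet => eVal φ f))
      = (θ + 2 - α) • Sum.elim (fun x => α * φ x) (fun f : G.edgeSet => eVal φ f) := by
  classical
  set v : V ⊕ G.edgeSet → ℝ :=
    Sum.elim (fun x => α * φ x) (fun f : G.edgeSet => eVal φ f) with hv
  have hAφ : ∀ x, ∑ y ∈ G.neighborFinset x, φ y = (r : ℝ) * φ x - θ * φ x := by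
    intro x
    have h1 := congrFun hφ x
    rw [SimpleGraph.lapMatrix_mulVec_apply] at h1
    simp only [Pi.smul_apply, smul_eq_mul, hreg x] at h1
    linarith
  funext z
  rw [lap_mulVec_row, nbr_sum_ite, Fintype.sum_sum_type]
  cases z with
  | inl x =>
    have hV : (∑ y : V, if G.totalGraph.Adj (inl x) (inl y) then v (inl x) - v (inl y) else 0)
        = (r : ℝ) * (α * φ x) - α * ((r : ℝ) * φ x - θ * φ x) := by
      simp only [totalGraph_adj_inl_inl, hv, Sum.elim_inl]
      rw [← nbr_sum_ite, Finset.sum_sub_distrib, Finset.sum_const, nsmul_eq_mul,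
        ← Finset.mul_sum, hAφ x]
      rw [show ((G.neighborFinset x).card : ℝ) = (r : ℝ) by rw [← hreg x]; rfl]
    have hE : (∑ f : G.edgeSet, if G.totalGraph.Adj (inl x) (inr f)
          then v (inl x) - v (inr f) else 0)
        = (r : ℝ) * (α * φ x) - ((r : ℝ) * φ x + ((r : ℝ) * φ x - θ * φ x)) := by
      simp only [totalGraph_adj_inl_inr, hv, Sum.elim_inl, Sum.elim_inr]
      rw [sum_inc x (fun e => α * φ x - eVal φ e)]
      simp only [eVal_mk]
      rw [show (∑ y ∈ G.neighborFinset x, (α * φ x - (φ x + φ y)))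
          = ∑ y ∈ G.neighborFinset x, ((α * φ x - φ x) - φ y) by
            apply Finset.sum_congr rfl; intros; ring]
      rw [Finset.sum_sub_distrib, Finset.sum_const, nsmul_eq_mul, hAφ x]
      rw [show ((G.neighborFinset x).card : ℝ) = (r : ℝ) by rw [← hreg x]; rfl]
      ring
    rw [hV, hE]
    simp only [Pi.smul_apply, hv, Sum.elim_inl, smul_eq_mul]
    linear_combination (φ x) * hα
  | inr f =>
    obtain ⟨ef, hef⟩ := f
    revert hef
    induction ef using Sym2.ind with
    | _ p q =>
      intro hef
      have hpq : G.Adj p q := G.mem_edgeSet.mp hef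
      have hne : p ≠ q := hpq.ne
      have hvf : v (inr ⟨s(p, q), hef⟩) = φ p + φ q := by simp [hv]
      have hV : (∑ y : V, if G.totalGraph.Adj (inr ⟨s(p, q), hef⟩) (inl y)
            then v (inr ⟨s(p, q), hef⟩) - v (inl y) else 0)
          = (2 - α) * (φ p + φ q) := by
        simp only [totalGraph_adj_inr_inl, hv, Sum.elim_inl, Sum.elim_inr]
        simp only [Sym2.mem_iff]
        rw [sum_pair_ite hne]
        simp only [eVal_mk]
        ring
      have hE : (∑ g : G.edgeSet, if G.totalGraph.Adj (inr ⟨s(p, q), hef⟩) (inr g)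
            then v (inr ⟨s(p, q), hef⟩) - v (inr g) else 0)
          = θ * (φ p + φ q) := by
        simp only [totalGraph_adj_inr_inr, hv, Sum.elim_inr]
        have hsplit : ∀ g : G.edgeSet,
            (if (⟨s(p, q), hef⟩ : G.edgeSet) ≠ g ∧
                ∃ w, w ∈ (s(p, q) : Sym2 V) ∧ w ∈ (g : Sym2 V)
              then eVal φ s(p, q) - eVal φ (g : Sym2 V) else 0)
            = (if p ∈ (g : Sym2 V) then
                (if (g : Sym2 V) = s(p, q) then 0
                  else eVal φ s(p, q) - eVal φ (g : Sym2 V)) else 0)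
              + (if q ∈ (g : Sym2 V) then
                (if (g : Sym2 V) = s(p, q) then 0
                  else eVal φ s(p, q) - eVal φ (g : Sym2 V)) else 0) := by
          intro g
          by_cases hg : (g : Sym2 V) = s(p, q)
          · have : (⟨s(p, q), hef⟩ : G.edgeSet) = g := Subtype.ext hg.symm
            simp [this, hg]
          · have hgne : (⟨s(p, q), hef⟩ : G.edgeSet) ≠ g := by
              intro h; exact hg (congrArg Subtype.val h).symm
            by_cases hp : p ∈ (g : Sym2 V) <;> by_cases hq : q ∈ (g : Sym2 V)
            · exact absurd ((Sym2.mem_and_mem_iff hne).mp ⟨hp, hq⟩) hg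
            · simp [hgne, hg, hp, hq, Sym2.mem_iff]
            · simp [hgne, hg, hp, hq, Sym2.mem_iff]
            · simp [hgne, hg, hp, hq, Sym2.mem_iff]
        rw [Finset.sum_congr rfl fun g _ => hsplit g, Finset.sum_add_distrib]
        rw [sum_inc p (fun e => if e = s(p, q) then 0 else eVal φ s(p, q) - eVal φ e),
          sum_inc q (fun e => if e = s(p, q) then 0 else eVal φ s(p, q) - eVal φ e)]
        have hterm1 : ∀ y : V, (if s(p, y) = s(p, q) then 0
            else eVal φ s(p, q) - eVal φ s(p, y)) = φ q - φ y := by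
          intro y
          by_cases hy : y = q
          · simp [hy]
          · rw [if_neg (fun h => hy (Sym2.congr_right.mp h))]
            simp only [eVal_mk]; ring
        have hterm2 : ∀ y : V, (if s(q, y) = s(p, q) then 0
            else eVal φ s(p, q) - eVal φ s(q, y)) = φ p - φ y := by
          intro y
          by_cases hy : y = p
          · simp [hy, Sym2.eq_swap]
          · rw [if_neg]
            · simp only [eVal_mk]; ring
            · intro h
              rw [Sym2.eq_swap (a := p)] at h
              exact hy (Sym2.congr_right.mp h)
        rw [Finset.sum_congr rfl fun y _ => hterm1 y,
          Finset.sum_congr rfl fun y _ => hterm2 y]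
        rw [Finset.sum_sub_distrib, Finset.sum_sub_distrib, Finset.sum_const,
          Finset.sum_const, nsmul_eq_mul, nsmul_eq_mul, hAφ p, hAφ q]
        rw [show ((G.neighborFinset p).card : ℝ) = (r : ℝ) by rw [← hreg p]; rfl]
        rw [show ((G.neighborFinset q).card : ℝ) = (r : ℝ) by rw [← hreg q]; rfl]
        ring
      rw [hV, hE]
      simp only [Pi.smul_apply, hv, Sum.elim_inr, smul_eq_mul]
      simp only [eVal_mk]
      ring


lemma proj_inner {W : Type*} [Fintype W] [DecidableEq W] (H : SimpleGraph W)
    [DecidableRel H.Adj] (μ : ℝ) (v x : EuclideanSpace ℝ W)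
    (hv : H.lapMatrix ℝ *ᵥ (v : W → ℝ) = μ • (v : W → ℝ)) :
    inner ℝ (lapProj H μ x) v = inner ℝ x v := by
  have hmem : v ∈ Module.End.eigenspace (Matrix.toEuclideanLin (H.lapMatrix ℝ)) μ := by
    rw [Module.End.mem_eigenspace_iff]
    ext i
    exact congrFun hv i
  have h0 := Submodule.starProjection_inner_eq_zero x v hmem
  rw [inner_sub_left] at h0
  rw [lapProj]
  exact (sub_eq_zero.mp h0).symm

lemma inner_pairStateR {W : Type*} [Fintype W] [DecidableEq W] (a b : W)
    (v : EuclideanSpace ℝ W) :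
    inner ℝ (pairStateR a b) v = v a - v b := by
  rw [pairStateR, inner_sub_left, EuclideanSpace.inner_single_left,
    EuclideanSpace.inner_single_left]
  simp

lemma key_sq {r : ℕ} (hreg : G.IsRegularOfDegree r) {a b : V} {c d : V ⊕ G.edgeSet}
    (hsc : StronglyCospectral G.totalGraph (inl a) (inl b) c d)
    (θ α : ℝ) (hα : α ^ 2 + ((r : ℝ) - 2) * α - (2 * r - θ) = 0)
    (φ : V → ℝ) (hφ : G.lapMatrix ℝ *ᵥ φ = θ • φ) :
    (α * (φ a - φ b)) ^ 2
      = (Sum.elim (fun x => α * φ x) (fun f : G.edgeSet => eVal φ f) c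
        - Sum.elim (fun x => α * φ x) (fun f : G.edgeSet => eVal φ f) d) ^ 2 := by
  classical
  set w : V ⊕ G.edgeSet → ℝ :=
    Sum.elim (fun x => α * φ x) (fun f : G.edgeSet => eVal φ f) with hw
  let v : EuclideanSpace ℝ (V ⊕ G.edgeSet) := WithLp.toLp 2 w
  have hv : G.totalGraph.lapMatrix ℝ *ᵥ (v : (V ⊕ G.edgeSet) → ℝ)
      = (θ + 2 - α) • (v : (V ⊕ G.edgeSet) → ℝ) := total_eigen hreg θ α hα φ hφ
  have h1 : inner ℝ (pairStateR (inl a) (inl b)) v = α * (φ a - φ b) := by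
    rw [inner_pairStateR]
    show w (inl a) - w (inl b) = _
    simp only [hw, Sum.elim_inl]; ring
  have h2 : inner ℝ (pairStateR c d) v = w c - w d := by
    rw [inner_pairStateR]
  rcases hsc (θ + 2 - α) with h | h
  · have := congrArg (fun z : EuclideanSpace ℝ (V ⊕ G.edgeSet) => inner ℝ z v) h
    simp only [proj_inner G.totalGraph (θ + 2 - α) v _ hv] at this
    rw [h1, h2] at this
    rw [this]
  · have := congrArg (fun z : EuclideanSpace ℝ (V ⊕ G.edgeSet) => inner ℝ z v) h
    simp only [inner_neg_left] at this
    simp only [proj_inner G.totalGraph (θ + 2 - α) v _ hv] at this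
    rw [h1, h2] at this
    rw [this]; ring

lemma eucl_inner_dot (u w : EuclideanSpace ℝ V) :
    inner ℝ u w = (u : V → ℝ) ⬝ᵥ (w : V → ℝ) := by
  simp [PiLp.inner_apply, RCLike.inner_apply, dotProduct, mul_comm]

lemma wlp_eq (z : EuclideanSpace ℝ V) : (WithLp.equiv 2 (V → ℝ)) z = z := rfl

lemma onb_dot_sum_mat {ι : Type*} [Fintype ι] (B : OrthonormalBasis ι ℝ (EuclideanSpace ℝ V))
    (N : Matrix V V ℝ) (ν : ι → ℝ)
    (hN : ∀ i, N *ᵥ ⇑(B i) = ν i • ⇑(B i)) (x y : V → ℝ) :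
    ∑ i, ν i * ((⇑(B i) ⬝ᵥ x) * (⇑(B i) ⬝ᵥ y)) = x ⬝ᵥ (N *ᵥ y) := by
  let x' : EuclideanSpace ℝ V := WithLp.toLp 2 x
  let y' : EuclideanSpace ℝ V := WithLp.toLp 2 y
  have hLy : Matrix.toEuclideanLin N y'
      = ∑ i, inner ℝ (B i) y' • (ν i • (B i)) := by
    conv_lhs => rw [← B.sum_repr' y']
    rw [map_sum]
    refine Finset.sum_congr rfl fun i _ => ?_
    rw [_root_.map_smul]
    congr 1
    ext j
    exact congrFun (hN i) j
  have hmain : inner ℝ x' (Matrix.toEuclideanLin N y')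
      = ∑ i, ν i * ((⇑(B i) ⬝ᵥ x) * (⇑(B i) ⬝ᵥ y)) := by
    rw [hLy, inner_sum]
    refine Finset.sum_congr rfl fun i _ => ?_
    rw [real_inner_smul_right, real_inner_smul_right]
    rw [eucl_inner_dot, eucl_inner_dot]
    change ⇑(B i) ⬝ᵥ y * (ν i * (x ⬝ᵥ ⇑(B i))) = ν i * (⇑(B i) ⬝ᵥ x * ⇑(B i) ⬝ᵥ y)
    rw [dotProduct_comm x]
    ring
  rw [← hmain]
  exact eucl_inner_dot x' (Matrix.toEuclideanLin N y')

lemma onb_dot_sum {ι : Type*} [Fintype ι] (B : OrthonormalBasis ι ℝ (EuclideanSpace ℝ V))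
    (x y : V → ℝ) :
    ∑ i, ((⇑(B i) ⬝ᵥ x) * (⇑(B i) ⬝ᵥ y)) = x ⬝ᵥ y := by
  have := onb_dot_sum_mat B 1 (fun _ => 1) (fun i => by simp [Matrix.one_mulVec]) x y
  simpa [Matrix.one_mulVec] using this

lemma lap_eigen_le {r : ℕ} (hreg : G.IsRegularOfDegree r) (θ : ℝ) (φ : V → ℝ) (hφ0 : φ ≠ 0)
    (hφ : G.lapMatrix ℝ *ᵥ φ = θ • φ) : θ ≤ 2 * r := by
  classical
  have hev : Module.End.HasEigenvalue (Matrix.toLin' (G.lapMatrix ℝ)) θ :=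
    Module.End.hasEigenvalue_of_hasEigenvector
      ⟨Module.End.mem_eigenspace_iff.mpr (by rw [Matrix.toLin'_apply]; exact hφ), hφ0⟩
  obtain ⟨k, hk⟩ := eigenvalue_mem_ball hev
  have hdiag : G.lapMatrix ℝ k k = (r : ℝ) := by
    simp [SimpleGraph.lapMatrix, SimpleGraph.degMatrix, hreg k]
  have hoff : ∀ j ∈ Finset.univ.erase k,
      ‖G.lapMatrix ℝ k j‖ = if G.Adj k j then (1:ℝ) else 0 := by
    intro j hj
    have hjk : k ≠ j := (Finset.ne_of_mem_erase hj).symm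
    rw [SimpleGraph.lapMatrix]
    simp only [Matrix.sub_apply, SimpleGraph.degMatrix, Matrix.diagonal_apply_ne _ hjk,
      SimpleGraph.adjMatrix_apply, zero_sub, norm_neg]
    split <;> simp
  have hsum : (∑ j ∈ Finset.univ.erase k, ‖G.lapMatrix ℝ k j‖) = (r : ℝ) := by
    rw [Finset.sum_congr rfl hoff, Finset.sum_erase _ (by simp)]
    rw [Finset.sum_boole]
    rw [show Finset.univ.filter (fun j => G.Adj k j) = G.neighborFinset k from
      (SimpleGraph.neighborFinset_eq_filter G (v := k)).symm]
    rw [show (G.neighborFinset k).card = r from hreg k]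
  rw [Metric.mem_closedBall, hdiag, hsum, Real.dist_eq] at hk
  have := abs_le.mp hk
  linarith [this.2]

lemma alphas {r : ℕ} (hr : 2 < r) (θ : ℝ) (hθ : θ ≤ 2 * r) :
    ∃ αp αm : ℝ, αp ≠ αm ∧ αp + αm = 2 - r ∧ αp * αm = θ - 2 * r ∧
      (αp ^ 2 + ((r : ℝ) - 2) * αp - (2 * r - θ) = 0) ∧
      (αm ^ 2 + ((r : ℝ) - 2) * αm - (2 * r - θ) = 0) := by
  have hr3 : (3 : ℝ) ≤ (r : ℝ) := by exact_mod_cast hr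
  have hd : 0 < ((r : ℝ) + 2) ^ 2 - 4 * θ := by
    nlinarith [mul_nonneg (by linarith : (0:ℝ) ≤ (r:ℝ) - 3) (by linarith : (0:ℝ) ≤ (r:ℝ) - 1)]
  have hΔsq : (Real.sqrt (((r : ℝ) + 2) ^ 2 - 4 * θ)) ^ 2 = ((r : ℝ) + 2) ^ 2 - 4 * θ :=
    Real.sq_sqrt hd.le
  have hΔpos : 0 < Real.sqrt (((r : ℝ) + 2) ^ 2 - 4 * θ) := Real.sqrt_pos.mpr hd
  set Δ := Real.sqrt (((r : ℝ) + 2) ^ 2 - 4 * θ)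
  refine ⟨(2 - r + Δ) / 2, (2 - r - Δ) / 2, ?_, by ring, ?_, ?_, ?_⟩
  · intro h
    have : Δ = 0 := by linarith [congrArg (fun t => t * 2) h, h]
    · exact hΔpos.ne' this
  · linear_combination (-(1 : ℝ) / 4) * hΔsq
  · linear_combination ((1 : ℝ) / 4) * hΔsq
  · linear_combination ((1 : ℝ) / 4) * hΔsq

def bvec (e : Sym2 V) : V → ℝ := fun y => if y ∈ e then 1 else 0

lemma ite_or_split {s t : V} (hne : s ≠ t) (g : V → ℝ) (y : V) :
    (if y = s ∨ y = t then g y else 0)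
      = (if y = s then g y else 0) + (if y = t then g y else 0) := by
  by_cases h1 : y = s <;> by_cases h2 : y = t <;> simp [h1, h2, hne, hne.symm]

lemma bvec_dot (φ : V → ℝ) (e : Sym2 V) (he : ¬ e.IsDiag) :
    bvec e ⬝ᵥ φ = eVal φ e := by
  induction e using Sym2.ind with
  | _ s t =>
    have hne : s ≠ t := fun h => he (by rw [h, Sym2.mk_isDiag_iff])
    simp only [bvec, dotProduct, Sym2.mem_iff, ite_mul, one_mul, zero_mul]
    rw [sum_pair_ite hne, eVal_mk]

lemma bvec_nonneg (e : Sym2 V) (y : V) : 0 ≤ bvec e y := by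
  unfold bvec; split <;> norm_num

lemma bvec_self (e : Sym2 V) (he : ¬ e.IsDiag) : bvec e ⬝ᵥ bvec e = 2 := by
  rw [bvec_dot _ e he]
  induction e using Sym2.ind with
  | _ s t =>
    have hne : s ≠ t := fun h => he (by rw [h, Sym2.mk_isDiag_iff])
    rw [eVal_mk]
    simp [bvec, Sym2.mem_iff]
    norm_num

lemma bvec_adj (e : Sym2 V) (he : e ∈ G.edgeSet) :
    bvec e ⬝ᵥ (G.adjMatrix ℝ *ᵥ bvec e) = 2 := by
  induction e using Sym2.ind with
  | _ s t =>
    have hadj : G.Adj s t := G.mem_edgeSet.mp he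
    have hne : s ≠ t := hadj.ne
    rw [bvec_dot _ _ (by simp [Sym2.mk_isDiag_iff, hne]), eVal_mk,
      SimpleGraph.adjMatrix_mulVec_apply, SimpleGraph.adjMatrix_mulVec_apply]
    simp only [bvec, Sym2.mem_iff]
    rw [Finset.sum_congr rfl fun y _ => ite_or_split hne (fun _ => 1) y,
      Finset.sum_congr rfl fun y _ => ite_or_split hne (fun _ => 1) y]
    rw [Finset.sum_add_distrib, Finset.sum_add_distrib,
      Finset.sum_ite_eq' _ s, Finset.sum_ite_eq' _ t, Finset.sum_ite_eq' _ s,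
      Finset.sum_ite_eq' _ t]
    simp [SimpleGraph.mem_neighborFinset, hadj, hadj.symm, G.irrefl]
    norm_num

lemma mulVec_nonneg_entry (w : V → ℝ) (hw : ∀ y, 0 ≤ w y) (y : V) :
    0 ≤ (G.adjMatrix ℝ *ᵥ w) y := by
  rw [SimpleGraph.adjMatrix_mulVec_apply]
  exact Finset.sum_nonneg fun z _ => hw z

lemma sc_swap {W : Type*} [Fintype W] [DecidableEq W] (H : SimpleGraph W)
    [DecidableRel H.Adj] {a b c d : W}
    (hsc : StronglyCospectral H a b c d) : StronglyCospectral H a b d c := by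
  intro θ
  have hneg : pairStateR d c = -pairStateR c d := by
    rw [pairStateR, pairStateR]; abel
  have hproj : lapProj H θ (pairStateR d c) = -lapProj H θ (pairStateR c d) := by
    rw [hneg, lapProj, lapProj, map_neg (Submodule.orthogonalProjectionOnto _)]
    rfl
  rcases hsc θ with h | h
  · right; rw [hproj, h, neg_neg]
  · left; rw [hproj, h]

lemma no_edge_edge {r : ℕ} (hr : 2 < r) (hreg : G.IsRegularOfDegree r)
    {a b : V} (hab : a ≠ b) (e f : G.edgeSet)
    (hsc : StronglyCospectral G.totalGraph (inl a) (inl b) (inr e) (inr f)) : False := by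
  classical
  have hherm : (G.lapMatrix ℝ).IsHermitian := (SimpleGraph.posSemidef_lapMatrix ℝ G).1
  set B := hherm.eigenvectorBasis with hB
  have hEig : ∀ i : V, G.lapMatrix ℝ *ᵥ ⇑(B i) = hherm.eigenvalues i • ⇑(B i) :=
    fun i => hherm.mulVec_eigenvectorBasis i
  have hD : ∀ i : V, (⇑(B i) : V → ℝ) a - ⇑(B i) b = 0 := by
    intro i
    have hb0 : ⇑(B i) ≠ 0 := fun h => B.orthonormal.ne_zero i (by ext j; exact congrFun h j)
    have hθ := lap_eigen_le hreg _ _ hb0 (hEig i)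
    obtain ⟨αp, αm, hne, hsum, hprod, hqp, hqm⟩ := alphas hr _ hθ
    have e1 := key_sq hreg hsc _ _ hqp _ (hEig i)
    have e2 := key_sq hreg hsc _ _ hqm _ (hEig i)
    simp only [Sum.elim_inr] at e1 e2
    have h3 : (αp - αm) * ((αp + αm) * ((⇑(B i) : V → ℝ) a - ⇑(B i) b) ^ 2) = 0 := by
      linear_combination e1 - e2
    have h4 : (αp + αm) * ((⇑(B i) : V → ℝ) a - ⇑(B i) b) ^ 2 = 0 :=
      (mul_eq_zero.mp h3).resolve_left (sub_ne_zero_of_ne hne)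
    have hrne : αp + αm ≠ 0 := by
      rw [hsum]
      have : (3 : ℝ) ≤ (r : ℝ) := by exact_mod_cast hr
      intro h; linarith [h]
    have h5 : ((⇑(B i) : V → ℝ) a - ⇑(B i) b) ^ 2 = 0 :=
      (mul_eq_zero.mp h4).resolve_left hrne
    exact pow_eq_zero_iff (by norm_num : (2:ℕ) ≠ 0) |>.mp h5
  have hzero : (EuclideanSpace.single a (1:ℝ) - EuclideanSpace.single b 1) = 0 := by
    rw [← B.sum_repr' (EuclideanSpace.single a (1:ℝ) - EuclideanSpace.single b 1)]
    apply Finset.sum_eq_zero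
    intro i _
    have h6 : inner ℝ (B i) (EuclideanSpace.single a (1:ℝ)
        - EuclideanSpace.single b 1) = 0 := by
      rw [inner_sub_right, EuclideanSpace.inner_single_right, EuclideanSpace.inner_single_right]
      simpa using hD i
    rw [h6, zero_smul]
  have h7 : inner ℝ (EuclideanSpace.single a (1:ℝ))
      (EuclideanSpace.single a (1:ℝ) - EuclideanSpace.single b 1) = 0 := by
    rw [hzero, inner_zero_right]
  rw [inner_sub_right, EuclideanSpace.inner_single_left, EuclideanSpace.inner_single_left] at h7
  simp [EuclideanSpace.single_apply, hab] at h7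

lemma no_mixed {r : ℕ} (hr : 2 < r) (hreg : G.IsRegularOfDegree r)
    {a b : V} (u' : V) (f : G.edgeSet)
    (hsc : StronglyCospectral G.totalGraph (inl a) (inl b) (inl u') (inr f)) : False := by
  classical
  have hr3 : (3 : ℝ) ≤ (r : ℝ) := by exact_mod_cast hr
  have hherm : (G.lapMatrix ℝ).IsHermitian := (SimpleGraph.posSemidef_lapMatrix ℝ G).1
  set B := hherm.eigenvectorBasis with hB
  have hEig : ∀ i : V, G.lapMatrix ℝ *ᵥ ⇑(B i) = hherm.eigenvalues i • ⇑(B i) :=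
    fun i => hherm.mulVec_eigenvectorBasis i
  have hfnd : ¬ (f : Sym2 V).IsDiag := G.not_isDiag_of_mem_edgeSet f.2
  set bb : V → ℝ := bvec (f : Sym2 V) with hbb
  set xx : V → ℝ := Pi.single u' 1 with hxx
  have pid : ∀ i : V,
      2 * ((2 * (r:ℝ) - hherm.eigenvalues i) * ((⇑(B i) ⬝ᵥ xx) * (⇑(B i) ⬝ᵥ bb)))
        = ((r:ℝ) - 2) * ((⇑(B i) ⬝ᵥ bb) * (⇑(B i) ⬝ᵥ bb)) := by
    intro i
    have hb0 : ⇑(B i) ≠ 0 := fun h => B.orthonormal.ne_zero i (by ext j; exact congrFun h j)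
    have hθ := lap_eigen_le hreg _ _ hb0 (hEig i)
    obtain ⟨αp, αm, hne, hsum, hprod, hqp, hqm⟩ := alphas hr _ hθ
    have e1 := key_sq hreg hsc _ _ hqp _ (hEig i)
    have e2 := key_sq hreg hsc _ _ hqm _ (hEig i)
    simp only [Sum.elim_inr, Sum.elim_inl] at e1 e2
    have hS : eVal (⇑(B i)) (f : Sym2 V) = ⇑(B i) ⬝ᵥ bb := by
      rw [hbb, ← bvec_dot _ _ hfnd, dotProduct_comm]
    have hT : (⇑(B i) : V → ℝ) u' = ⇑(B i) ⬝ᵥ xx := by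
      rw [hxx, dotProduct_comm, single_dotProduct, one_mul]
    rw [hS, hT] at e1 e2
    set D := (⇑(B i) : V → ℝ) a - ⇑(B i) b with hD
    set T := ⇑(B i) ⬝ᵥ xx with hTT
    set S := ⇑(B i) ⬝ᵥ bb with hSS
    have h1 : (αp - αm) * ((αp + αm) * (D ^ 2 - T ^ 2) + 2 * (T * S)) = 0 := by
      linear_combination e1 - e2
    have h2 : (αp + αm) * (D ^ 2 - T ^ 2) + 2 * (T * S) = 0 :=
      (mul_eq_zero.mp h1).resolve_left (sub_ne_zero_of_ne hne)
    have h3 : (αp ^ 2 + αm ^ 2) * (D ^ 2 - T ^ 2) + 2 * (αp + αm) * (T * S) - 2 * S ^ 2 = 0 := by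
      linear_combination e1 + e2
    have h4 : (2 * (r:ℝ) - hherm.eigenvalues i) * (D ^ 2 - T ^ 2) - S ^ 2 = 0 := by
      linear_combination (-(αp + αm) / 2) * h2 + (1 / 2 : ℝ) * h3 + (D ^ 2 - T ^ 2) * hprod
    linear_combination (2 * (r:ℝ) - hherm.eigenvalues i) * h2 - (αp + αm) * h4 - S ^ 2 * hsum
  set NN : Matrix V V ℝ := (2 * (r:ℝ)) • (1 : Matrix V V ℝ) - G.lapMatrix ℝ with hNN
  have hNv : ∀ i : V, NN *ᵥ ⇑(B i) = (2 * (r:ℝ) - hherm.eigenvalues i) • ⇑(B i) := by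
    intro i
    rw [hNN, Matrix.sub_mulVec, hEig i, Matrix.smul_mulVec, Matrix.one_mulVec]
    ext y
    simp only [Pi.sub_apply, Pi.smul_apply, smul_eq_mul]
    ring
  have hN2v : ∀ i : V, (NN * NN) *ᵥ ⇑(B i)
      = ((2 * (r:ℝ) - hherm.eigenvalues i) ^ 2) • ⇑(B i) := by
    intro i
    rw [← Matrix.mulVec_mulVec, hNv i, Matrix.mulVec_smul, hNv i]
    ext y
    simp only [Pi.smul_apply, smul_eq_mul]
    ring
  have eq0 : 2 * (xx ⬝ᵥ (NN *ᵥ bb)) = ((r:ℝ) - 2) * (bb ⬝ᵥ bb) := by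
    rw [← onb_dot_sum_mat B NN _ hNv xx bb, ← onb_dot_sum B bb bb,
      Finset.mul_sum, Finset.mul_sum]
    exact Finset.sum_congr rfl fun i _ => by linear_combination pid i
  have eq1 : 2 * (xx ⬝ᵥ ((NN * NN) *ᵥ bb)) = ((r:ℝ) - 2) * (bb ⬝ᵥ (NN *ᵥ bb)) := by
    rw [← onb_dot_sum_mat B (NN * NN) _ hN2v xx bb, ← onb_dot_sum_mat B NN _ hNv bb bb,
      Finset.mul_sum, Finset.mul_sum]
    exact Finset.sum_congr rfl fun i _ => by
      linear_combination (2 * (r:ℝ) - hherm.eigenvalues i) * pid i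
  -- rewrite NN via adjacency matrix
  have hNN2 : NN = (r:ℝ) • (1 : Matrix V V ℝ) + G.adjMatrix ℝ := by
    rw [hNN]
    ext i j
    by_cases h : i = j
    · subst h
      simp [SimpleGraph.lapMatrix, SimpleGraph.degMatrix, hreg i, Matrix.one_apply]
      ring
    · simp [SimpleGraph.lapMatrix, SimpleGraph.degMatrix, Matrix.one_apply, h,
        Matrix.diagonal_apply_ne _ h]
  have hMb : NN *ᵥ bb = (r:ℝ) • bb + G.adjMatrix ℝ *ᵥ bb := by
    rw [hNN2, Matrix.add_mulVec, Matrix.smul_mulVec, Matrix.one_mulVec]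
  have hMMb : (NN * NN) *ᵥ bb = ((r:ℝ) ^ 2) • bb + (2 * (r:ℝ)) • (G.adjMatrix ℝ *ᵥ bb)
      + G.adjMatrix ℝ *ᵥ (G.adjMatrix ℝ *ᵥ bb) := by
    rw [← Matrix.mulVec_mulVec, hMb, Matrix.mulVec_add, Matrix.mulVec_smul, hMb,
      hNN2, Matrix.add_mulVec, Matrix.smul_mulVec, Matrix.one_mulVec]
    ext y
    simp only [Pi.add_apply, Pi.smul_apply, smul_eq_mul]
    ring
  have hxdot : ∀ w : V → ℝ, xx ⬝ᵥ w = w u' := by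
    intro w
    rw [hxx, single_dotProduct, one_mul]
  have hbbself : bb ⬝ᵥ bb = 2 := bvec_self _ hfnd
  have hbbadj : bb ⬝ᵥ (G.adjMatrix ℝ *ᵥ bb) = 2 := bvec_adj _ f.2
  have hP : 0 ≤ (G.adjMatrix ℝ *ᵥ bb) u' := mulVec_nonneg_entry _ (fun y => bvec_nonneg _ y) u'
  have hQ : 0 ≤ (G.adjMatrix ℝ *ᵥ (G.adjMatrix ℝ *ᵥ bb)) u' :=
    mulVec_nonneg_entry _ (fun y => mulVec_nonneg_entry _ (fun z => bvec_nonneg _ z) y) u'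
  have hβ : bb u' = 0 ∨ bb u' = 1 := by
    rw [hbb]; unfold bvec; split <;> simp
  rw [hxdot, hMb, hbbself] at eq0
  rw [hxdot, hMMb, hMb, dotProduct_add, dotProduct_smul, hbbself, hbbadj] at eq1
  simp only [Pi.add_apply, Pi.smul_apply, smul_eq_mul] at eq0 eq1
  rcases hβ with h | h <;> rw [h] at eq0 eq1
  · nlinarith [hP, hQ, hr3, mul_nonneg (by linarith : (0:ℝ) ≤ (r:ℝ) - 3)
      (by linarith : (0:ℝ) ≤ (r:ℝ))]
  · nlinarith [hP, hr3]

end AuxStmt19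

/-- In the total graph of an `r`-regular connected non-bipartite graph with `r > 2`, if a
vertex-vertex pair state `e_a - e_b` is Laplacian strongly cospectral to a pair state
`e_c - e_d`, then `c` and `d` are both vertices of `G`. -/

theorem stmt19 {V : Type*} (G : SimpleGraph V) [Fintype V] [DecidableEq V] [DecidableRel G.Adj]
    (r : ℕ) (hr : 2 < r) (hreg : G.IsRegularOfDegree r) (hconn : G.Connected)
    (hnb : ¬ IsBipartite G)
    (a b : V) (hab : a ≠ b) (c d : V ⊕ G.edgeSet) (hcd : c ≠ d)
    (hsc : StronglyCospectral G.totalGraph (Sum.inl a) (Sum.inl b) c d) :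
    (∃ u : V, c = Sum.inl u) ∧ (∃ v : V, d = Sum.inl v) := by
  cases c with
  | inl u =>
    cases d with
    | inl v => exact ⟨⟨u, rfl⟩, ⟨v, rfl⟩⟩
    | inr f => exact (no_mixed hr hreg u f hsc).elim
  | inr e =>
    cases d with
    | inl v => exact (no_mixed hr hreg v e (sc_swap _ hsc)).elim
    | inr f => exact (no_edge_edge hr hreg hab e f hsc).elim
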